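/- For every g ≥ 1, the group Sp(2g,ℤ) acts transitively on the even cosets of Göpel groups: for any two Göpel groups G, G′ ⊆ 𝔽₂^{2g} with even cosets M, M′, there exists M₀ ∈ Sp(2g,ℤ) such that the characteristic action m ↦ M₀{m} maps M bijectively onto M′. -/
import Mathlib


open BigOperators Matrix

/-- Theta characteristics in genus `g`: pairs `(a, b)` with `a, b ∈ 𝔽₂^g`. -/
abbrev TChar (g : ℕ) := (Fin g → ZMod 2) × (Fin g → ZMod 2)

/-- A theta characteristic `(a, b)` is even if `Σᵢ aᵢbᵢ = 0` in `𝔽₂`. -/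
def IsEvenChar {g : ℕ} (m : TChar g) : Prop := ∑ i, m.1 i * m.2 i = 0

/-- The standard symplectic pairing `⟨m,n⟩ = aᵀβ + bᵀα` on `𝔽₂^{2g}`. -/
def symplecticPairing {g : ℕ} (m n : TChar g) : ZMod 2 :=
  ∑ i, (m.1 i * n.2 i + m.2 i * n.1 i)

/-- A subspace is totally isotropic if the symplectic pairing vanishes on it. -/
def IsIsotropic {g : ℕ} (G : Submodule (ZMod 2) (TChar g)) : Prop :=
  ∀ m ∈ G, ∀ n ∈ G, symplecticPairing m n = 0

/-- A Göpel group is a maximal totally isotropic subspace of `𝔽₂^{2g}`. -/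
def IsGopel {g : ℕ} (G : Submodule (ZMod 2) (TChar g)) : Prop :=
  IsIsotropic G ∧ ∀ G' : Submodule (ZMod 2) (TChar g), IsIsotropic G' → G ≤ G' → G' = G

/-- The even coset of a Göpel group `G`: those `m` with `m + G` consisting of
even characteristics. -/
def evenCoset {g : ℕ} (G : Submodule (ZMod 2) (TChar g)) : Set (TChar g) :=
  {m | ∀ x ∈ G, IsEvenChar (m + x)}

open Matrix

/-- `2g × 2g` integral matrices, written in `g × g` blocks. -/
abbrev SpMat (g : ℕ) := Matrix (Fin g ⊕ Fin g) (Fin g ⊕ Fin g) ℤ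

/-- The standard symplectic form `J = (0 −E; E 0)`. -/
def Jmat (g : ℕ) : SpMat g := Matrix.fromBlocks 0 (-1) 1 0

/-- `M ∈ Sp(2g,ℤ)`, i.e. `MᵀJM = J`. -/
def IsSymplectic {g : ℕ} (M : SpMat g) : Prop := Mᵀ * Jmat g * M = Jmat g

/-- The action `M{m} = (Mᵀ)⁻¹ m + (diag(CDᵀ), diag(ABᵀ))` (mod 2) of a symplectic
matrix `M = (A B; C D)` on theta characteristics. -/
noncomputable def charAct {g : ℕ} (M : SpMat g) (m : TChar g) : TChar g :=
  let Mb : Matrix (Fin g ⊕ Fin g) (Fin g ⊕ Fin g) (ZMod 2) := M.map (Int.cast)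
  let v : (Fin g ⊕ Fin g) → ZMod 2 := (Mbᵀ)⁻¹.mulVec (Sum.elim m.1 m.2)
  (fun i => v (Sum.inl i) + (((M.toBlocks₂₁ * M.toBlocks₂₂ᵀ) i i : ℤ) : ZMod 2),
   fun i => v (Sum.inr i) + (((M.toBlocks₁₁ * M.toBlocks₁₂ᵀ) i i : ℤ) : ZMod 2))

set_option linter.unusedSectionVars false

namespace SpAux

variable {g : ℕ}

lemma z2add : ∀ x : ZMod 2, x + x = 0 := by decide

lemma z2sq : ∀ x : ZMod 2, x * x = x := by decide

lemma sp_add_left (m n p : TChar g) :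
    symplecticPairing (m + n) p = symplecticPairing m p + symplecticPairing n p := by
  simp only [symplecticPairing, Prod.fst_add, Prod.snd_add, Pi.add_apply, ← Finset.sum_add_distrib]
  exact Finset.sum_congr rfl fun i _ => by ring

lemma sp_add_right (m n p : TChar g) :
    symplecticPairing m (n + p) = symplecticPairing m n + symplecticPairing m p := by
  simp only [symplecticPairing, Prod.fst_add, Prod.snd_add, Pi.add_apply, ← Finset.sum_add_distrib]
  exact Finset.sum_congr rfl fun i _ => by ring

lemma sp_smul_left (c : ZMod 2) (m p : TChar g) :
    symplecticPairing (c • m) p = c * symplecticPairing m p := by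
  simp only [symplecticPairing, Prod.smul_fst, Prod.smul_snd, Pi.smul_apply, smul_eq_mul,
    Finset.mul_sum]
  exact Finset.sum_congr rfl fun i _ => by ring

lemma sp_smul_right (c : ZMod 2) (m p : TChar g) :
    symplecticPairing m (c • p) = c * symplecticPairing m p := by
  simp only [symplecticPairing, Prod.smul_fst, Prod.smul_snd, Pi.smul_apply, smul_eq_mul,
    Finset.mul_sum]
  exact Finset.sum_congr rfl fun i _ => by ring

lemma sp_comm (m n : TChar g) : symplecticPairing m n = symplecticPairing n m :=
  Finset.sum_congr rfl fun i _ => by ring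

lemma sp_self (m : TChar g) : symplecticPairing m m = 0 := by
  unfold symplecticPairing
  rw [Finset.sum_eq_zero]
  intro i _
  rw [mul_comm]
  exact z2add _

/-- The symplectic transvection attached to `v`. -/
def tvL (v : TChar g) : TChar g →ₗ[ZMod 2] TChar g where
  toFun m := m + symplecticPairing m v • v
  map_add' x y := by
    show (x + y) + symplecticPairing (x + y) v • v
        = (x + symplecticPairing x v • v) + (y + symplecticPairing y v • v)
    rw [sp_add_left, add_smul]; abel
  map_smul' c x := by
    show (c • x) + symplecticPairing (c • x) v • v = c • (x + symplecticPairing x v • v)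
    rw [sp_smul_left, mul_smul, smul_add]

lemma tvL_apply (v m : TChar g) : tvL v m = m + symplecticPairing m v • v := rfl

lemma addself (m : TChar g) : m + m = 0 := by
  have : (2 : ZMod 2) • m = m + m := two_smul _ m
  rw [show ((2 : ZMod 2)) = 0 by decide] at this
  rw [← this, zero_smul]

lemma tvL_invol (v : TChar g) : tvL v * tvL v = 1 := by
  apply LinearMap.ext; intro m
  rw [Module.End.mul_apply, Module.End.one_apply, tvL_apply, tvL_apply, sp_add_left,
    sp_smul_left, sp_self, mul_zero, add_zero, add_assoc, ← add_smul, z2add, zero_smul, add_zero]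

end SpAux


namespace SpAux
variable {g : ℕ}

lemma sp_tvL (v m n : TChar g) :
    symplecticPairing (tvL v m) (tvL v n) = symplecticPairing m n := by
  rw [tvL_apply, tvL_apply, sp_add_left, sp_add_right, sp_add_right, sp_smul_left,
    sp_smul_left, sp_smul_right, sp_smul_right, sp_self, sp_comm v n]
  linear_combination z2add (symplecticPairing m v * symplecticPairing n v)

/-- image of a Gopel group under an ω-preserving involution is Gopel -/
lemma gopel_map (f : TChar g →ₗ[ZMod 2] TChar g)
    (hσ : ∀ m n, symplecticPairing (f m) (f n) = symplecticPairing m n)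
    (hff : f * f = 1) {G : Submodule (ZMod 2) (TChar g)} (hG : IsGopel G) :
    IsGopel (G.map f) := by
  have hmapmap : ∀ H : Submodule (ZMod 2) (TChar g), (H.map f).map f = H := by
    intro H
    rw [← Submodule.map_comp, ← Module.End.mul_eq_comp, hff, Module.End.one_eq_id,
      Submodule.map_id]
  constructor
  · rintro m ⟨x, hx, rfl⟩ n ⟨y, hy, rfl⟩
    rw [hσ]; exact hG.1 x hx y hy
  · intro H hH hle
    have h1 : IsIsotropic (H.map f) := by
      rintro m ⟨x, hx, rfl⟩ n ⟨y, hy, rfl⟩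
      rw [hσ]; exact hH x hx y hy
    have h2 : G ≤ H.map f := by
      have := Submodule.map_mono (f := f) hle
      rwa [hmapmap] at this
    have h3 : H.map f = G := hG.2 _ h1 h2
    rw [← hmapmap H, h3]

end SpAux


namespace SpAux
variable {g : ℕ}

lemma exists_pair {G G' : Submodule (ZMod 2) (TChar g)} (hG : IsGopel G) (hG' : IsGopel G')
    (hne : G ≠ G') : ∃ u ∈ G, ∃ w ∈ G', symplecticPairing u w = 1 := by
  by_contra hc
  push_neg at hc
  have hzero : ∀ u ∈ G, ∀ w ∈ G', symplecticPairing u w = 0 := by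
    intro u hu w hw
    have := hc u hu w hw
    have h01 : ∀ x : ZMod 2, x ≠ 1 → x = 0 := by decide
    exact h01 _ this
  have hiso : IsIsotropic (G ⊔ G') := by
    intro m hm n hn
    obtain ⟨x, hx, y, hy, rfl⟩ := Submodule.mem_sup.1 hm
    obtain ⟨x', hx', y', hy', rfl⟩ := Submodule.mem_sup.1 hn
    rw [sp_add_left, sp_add_right, sp_add_right]
    rw [hG.1 x hx x' hx', hzero x hx y' hy', sp_comm y x', hzero x' hx' y hy,
      hG'.1 y hy y' hy']
    simp
  have h1 : G ⊔ G' = G := hG.2 _ hiso le_sup_left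
  have h2 : G' ≤ G := h1 ▸ le_sup_right
  exact hne (hG'.2 G hG.1 h2)

lemma step {G G' : Submodule (ZMod 2) (TChar g)} (hG : IsGopel G) (hG' : IsGopel G')
    (hne : G ≠ G') :
    ∃ v : TChar g, IsGopel (G.map (tvL v)) ∧ G ⊓ G' < (G.map (tvL v)) ⊓ G' := by
  obtain ⟨u, hu, w, hw, huw⟩ := exists_pair hG hG' hne
  refine ⟨u + w, gopel_map _ (sp_tvL _) (tvL_invol _) hG, ?_⟩
  have hwG : w ∉ G := fun h => by
    have := hG.1 u hu w h
    rw [huw] at this; exact one_ne_zero this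
  have htvu : tvL (u + w) u = w := by
    rw [tvL_apply, sp_add_right, sp_self, zero_add, huw, one_smul, ← add_assoc,
      addself, zero_add]
  rw [SetLike.lt_iff_le_and_exists]
  constructor
  · rintro x ⟨hxG, hxG'⟩
    refine ⟨?_, hxG'⟩
    have hfix : tvL (u + w) x = x := by
      rw [tvL_apply, sp_add_right, hG.1 x hxG u hu, hG'.1 x hxG' w hw, add_zero,
        zero_smul, add_zero]
    exact Submodule.mem_map.2 ⟨x, hxG, hfix⟩
  · refine ⟨w, ⟨Submodule.mem_map.2 ⟨u, hu, htvu⟩, hw⟩, fun hx => hwG hx.1⟩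

lemma exists_list_aux (G' : Submodule (ZMod 2) (TChar g)) (hG' : IsGopel G') :
    ∀ n : ℕ, ∀ G : Submodule (ZMod 2) (TChar g), IsGopel G →
      Module.finrank (ZMod 2) (TChar g) ≤ n + Module.finrank (ZMod 2) ↥(G ⊓ G') →
      ∃ L : List (TChar g), G.map ((L.map tvL).prod) = G' := by
  intro n
  induction n with
  | zero =>
    intro G hG hr
    -- G ⊓ G' = ⊤ so G = G'
    have hfl : Module.finrank (ZMod 2) ↥G ≤ Module.finrank (ZMod 2) ↥(G ⊓ G') := by
      have := Submodule.finrank_le G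
      omega
    have hfr : Module.finrank (ZMod 2) ↥G' ≤ Module.finrank (ZMod 2) ↥(G ⊓ G') := by
      have := Submodule.finrank_le G'
      omega
    have e1 : G ⊓ G' = G := Submodule.eq_of_le_of_finrank_le inf_le_left hfl
    have e2 : G ⊓ G' = G' := Submodule.eq_of_le_of_finrank_le inf_le_right hfr
    have hGG' : G = G' := e1 ▸ e2
    exact ⟨[], by
      rw [List.map_nil, List.prod_nil, Module.End.one_eq_id, Submodule.map_id]
      exact hGG'⟩
  | succ n ih =>
    intro G hG hr
    by_cases hne : G = G'
    · exact ⟨[], by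
        rw [List.map_nil, List.prod_nil, Module.End.one_eq_id, Submodule.map_id]
        exact hne⟩
    · obtain ⟨v, hgop, hlt⟩ := step hG hG' hne
      have hrank : Module.finrank (ZMod 2) ↥(G ⊓ G') <
          Module.finrank (ZMod 2) ↥((G.map (tvL v)) ⊓ G') :=
        Submodule.finrank_lt_finrank_of_lt hlt
      obtain ⟨L, hL⟩ := ih (G.map (tvL v)) hgop (by omega)
      refine ⟨L ++ [v], ?_⟩
      rw [List.map_append, List.prod_append, List.map_singleton, List.prod_singleton,
        Module.End.mul_eq_comp, Submodule.map_comp, hL]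

lemma exists_list {G G' : Submodule (ZMod 2) (TChar g)} (hG : IsGopel G) (hG' : IsGopel G') :
    ∃ L : List (TChar g), G.map ((L.map tvL).prod) = G' :=
  exists_list_aux G' hG' (Module.finrank (ZMod 2) (TChar g)) G hG (by omega)

end SpAux

namespace SpAux
variable {g : ℕ}

lemma Jmat_eq (g : ℕ) : Jmat g = Matrix.J (Fin g) ℤ := rfl

lemma isSymplectic_iff_mem (M : SpMat g) :
    IsSymplectic M ↔ M ∈ Matrix.symplecticGroup (Fin g) ℤ := by
  rw [SymplecticGroup.mem_iff', IsSymplectic, Jmat_eq]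

lemma isSymplectic_mul {M N : SpMat g} (hM : IsSymplectic M) (hN : IsSymplectic N) :
    IsSymplectic (M * N) := by
  rw [isSymplectic_iff_mem] at *
  exact mul_mem hM hN

lemma isSymplectic_one : IsSymplectic (1 : SpMat g) := by
  rw [isSymplectic_iff_mem]; exact one_mem _

lemma isSymplectic_other {M : SpMat g} (hM : IsSymplectic M) : M * Jmat g * Mᵀ = Jmat g := by
  rw [isSymplectic_iff_mem] at hM
  rw [Jmat_eq]
  exact SymplecticGroup.mem_iff.1 hM

/-- transvection: integral lift vector -/
def zInt (v : TChar g) : (Fin g ⊕ Fin g) → ℤ :=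
  Sum.elim (fun i => ((v.2 i).val : ℤ)) (fun i => ((v.1 i).val : ℤ))

/-- integral symplectic transvection matrix -/
def Nmat (v : TChar g) : SpMat g := 1 + vecMulVec (zInt v) ((Jmat g).mulVec (zInt v))

section VecMulVec
variable {R : Type*} [CommRing R] {ι : Type*} [Fintype ι]

lemma mul_vecMulVec (X : Matrix ι ι R) (u w : ι → R) :
    X * vecMulVec u w = vecMulVec (X.mulVec u) w := by
  ext i j
  simp only [Matrix.mul_apply, vecMulVec_apply, Matrix.mulVec, dotProduct, Finset.sum_mul]
  exact Finset.sum_congr rfl fun k _ => by ring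

lemma vecMulVec_mul (X : Matrix ι ι R) (u w : ι → R) :
    vecMulVec u w * X = vecMulVec u (X.vecMul w) := by
  ext i j
  simp only [Matrix.mul_apply, vecMulVec_apply, Matrix.vecMul, dotProduct, Finset.mul_sum]
  exact Finset.sum_congr rfl fun k _ => by ring

lemma vecMulVec_mulVec (u w x : ι → R) :
    (vecMulVec u w).mulVec x = (w ⬝ᵥ x) • u := by
  ext i
  simp only [Matrix.mulVec, dotProduct, vecMulVec_apply, Pi.smul_apply, smul_eq_mul,
    Finset.sum_mul, Finset.mul_sum]
  exact Finset.sum_congr rfl fun k _ => by ring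

lemma vecMulVec_smul_left (c : R) (u w : ι → R) :
    vecMulVec (c • u) w = c • vecMulVec u w := by
  ext i j
  simp only [vecMulVec_apply, Pi.smul_apply, smul_eq_mul, Matrix.smul_apply]
  ring

end VecMulVec

lemma vecMul_J (u : Fin g ⊕ Fin g → ℤ) : (Jmat g).vecMul u = -(Jmat g).mulVec u := by
  rw [← Matrix.mulVec_transpose, Jmat_eq, Matrix.J_transpose, Matrix.neg_mulVec]

lemma J_alt (u : Fin g ⊕ Fin g → ℤ) : u ⬝ᵥ (Jmat g).mulVec u = 0 := by
  have h : u ⬝ᵥ (Jmat g).mulVec u = -(u ⬝ᵥ (Jmat g).mulVec u) := by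
    conv_lhs => rw [Matrix.dotProduct_mulVec, vecMul_J, neg_dotProduct,
      dotProduct_comm]
  linarith

lemma vecMulVec_zero_left {R : Type*} [CommRing R] {ι : Type*} [Fintype ι] (w : ι → R) :
    vecMulVec (0 : ι → R) w = 0 := by
  ext i j; simp [vecMulVec_apply]

lemma Nmat_symplectic (v : TChar g) : IsSymplectic (Nmat v) := by
  unfold IsSymplectic Nmat
  set u := zInt v with hu
  set w := (Jmat g).mulVec u with hw
  have htr : (1 + vecMulVec u w)ᵀ = 1 + vecMulVec w u := by
    rw [Matrix.transpose_add, Matrix.transpose_one]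
    congr 1
    ext i j
    simp [vecMulVec_apply, Matrix.transpose_apply, mul_comm]
  have hneg : vecMulVec w (-w) = -(vecMulVec w w) := by
    ext i j; simp [vecMulVec_apply]
  have hWJ : vecMulVec w u * Jmat g = -(vecMulVec w w) := by
    rw [vecMulVec_mul, vecMul_J, ← hw, hneg]
  have hJU : Jmat g * vecMulVec u w = vecMulVec w w := by
    rw [mul_vecMulVec, ← hw]
  have hdot : w ⬝ᵥ u = 0 := by rw [dotProduct_comm, hw]; exact J_alt u
  have hVU : vecMulVec w w * vecMulVec u w = 0 := by
    rw [mul_vecMulVec, vecMulVec_mulVec, hdot, zero_smul, vecMulVec_zero_left]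
  rw [htr]
  calc (1 + vecMulVec w u) * Jmat g * (1 + vecMulVec u w)
      = Jmat g + vecMulVec w u * Jmat g + (Jmat g * vecMulVec u w
        + vecMulVec w u * Jmat g * vecMulVec u w) := by noncomm_ring
    _ = Jmat g := by
        rw [hWJ, hJU, Matrix.neg_mul, hVU, neg_zero, add_zero]
        abel

end SpAux


namespace SpAux
variable {g : ℕ}

lemma z2neg : ∀ x : ZMod 2, -x = x := by decide

/-- J over 𝔽₂ -/
def Jb (g : ℕ) : Matrix (Fin g ⊕ Fin g) (Fin g ⊕ Fin g) (ZMod 2) :=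
  Matrix.fromBlocks 0 1 1 0

lemma neg_one_z2 : (-1 : Matrix (Fin g ⊕ Fin g) (Fin g ⊕ Fin g) (ZMod 2)) = 1 := by
  ext i j
  rw [Matrix.neg_apply, z2neg]

lemma map_mulZ (X Y : SpMat g) :
    (X * Y).map (Int.cast : ℤ → ZMod 2) = X.map Int.cast * Y.map Int.cast := by
  exact Matrix.map_mul (f := Int.castRingHom (ZMod 2))

lemma map_transposeZ (X : SpMat g) :
    (Xᵀ).map (Int.cast : ℤ → ZMod 2) = (X.map Int.cast)ᵀ := by
  ext i j; rfl

lemma map_oneZ : ((1 : SpMat g)).map (Int.cast : ℤ → ZMod 2) = 1 := by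
  exact Matrix.map_one Int.cast (by simp) (by simp)

lemma Jmat_map : (Jmat g).map (Int.cast : ℤ → ZMod 2) = Jb g := by
  unfold Jmat Jb
  rw [Matrix.fromBlocks_map]
  have hm1 : ((-1 : Matrix (Fin g) (Fin g) ℤ)).map (Int.cast : ℤ → ZMod 2) = 1 := by
    ext i j
    simp only [Matrix.map_apply, Matrix.neg_apply, Int.cast_neg]
    rw [z2neg]
    by_cases h : i = j <;> simp [Matrix.one_apply, h]
  have h1 : ((1 : Matrix (Fin g) (Fin g) ℤ)).map (Int.cast : ℤ → ZMod 2) = 1 :=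
    Matrix.map_one _ (by simp) (by simp)
  have h0 : ((0 : Matrix (Fin g) (Fin g) ℤ)).map (Int.cast : ℤ → ZMod 2) = 0 := by
    ext i j; simp
  rw [hm1, h1, h0]

lemma Jb_sq : Jb g * Jb g = 1 := by
  unfold Jb
  rw [Matrix.fromBlocks_multiply]
  simp [← Matrix.fromBlocks_one]

lemma Jb_transpose : (Jb g)ᵀ = Jb g := by
  unfold Jb
  rw [Matrix.fromBlocks_transpose, Matrix.transpose_zero, Matrix.transpose_one]

lemma map_symp {M : SpMat g} (hM : IsSymplectic M) :
    (M.map (Int.cast : ℤ → ZMod 2))ᵀ * Jb g * M.map Int.cast = Jb g := by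
  have h := congrArg (fun X : SpMat g => X.map (Int.cast : ℤ → ZMod 2)) hM
  simp only [map_mulZ, map_transposeZ, Jmat_map] at h
  exact h

lemma inv_transpose_eq {M : SpMat g} (hM : IsSymplectic M) :
    ((M.map (Int.cast : ℤ → ZMod 2))ᵀ)⁻¹ = Jb g * M.map Int.cast * Jb g := by
  apply Matrix.inv_eq_right_inv
  calc (M.map (Int.cast : ℤ → ZMod 2))ᵀ * (Jb g * M.map Int.cast * Jb g)
      = ((M.map (Int.cast : ℤ → ZMod 2))ᵀ * Jb g * M.map Int.cast) * Jb g := by noncomm_ring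
    _ = Jb g * Jb g := by rw [map_symp hM]
    _ = 1 := Jb_sq

lemma zInt_map (v : TChar g) :
    (fun i => ((zInt v i : ℤ) : ZMod 2)) = Sum.elim v.2 v.1 := by
  funext i
  cases i with
  | inl i => simp [zInt, ZMod.natCast_val, ZMod.cast_id]
  | inr i => simp [zInt, ZMod.natCast_val, ZMod.cast_id]

lemma map_mulVecZ (X : SpMat g) (x : Fin g ⊕ Fin g → ℤ) :
    (fun i => ((X.mulVec x i : ℤ) : ZMod 2))
      = (X.map Int.cast).mulVec (fun i => ((x i : ℤ) : ZMod 2)) := by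
  funext i
  simp only [Matrix.mulVec, dotProduct, Matrix.map_apply]
  push_cast
  rfl

lemma Jb_mulVec_elim (x y : Fin g → ZMod 2) :
    (Jb g).mulVec (Sum.elim x y) = Sum.elim y x := by
  unfold Jb
  rw [Matrix.fromBlocks_mulVec]
  simp

lemma Nmat_map (v : TChar g) :
    (Nmat v).map (Int.cast : ℤ → ZMod 2)
      = 1 + vecMulVec (Sum.elim v.2 v.1) ((Jb g).mulVec (Sum.elim v.2 v.1)) := by
  unfold Nmat
  have hadd : ∀ X Y : SpMat g, (X + Y).map (Int.cast : ℤ → ZMod 2)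
      = X.map Int.cast + Y.map Int.cast := by
    intro X Y; ext i j; simp [Matrix.map_apply, Matrix.add_apply]
  rw [hadd, map_oneZ]
  congr 1
  ext i j
  simp only [Matrix.map_apply, vecMulVec_apply]
  push_cast
  rw [congrFun (zInt_map v) i]
  rw [congrFun (map_mulVecZ (Jmat g) (zInt v)) j, Jmat_map, zInt_map]

lemma pack_add (m n : TChar g) :
    Sum.elim (m + n).1 (m + n).2 = Sum.elim m.1 m.2 + Sum.elim n.1 n.2 := by
  funext i; cases i <;> rfl

lemma pack_smul (c : ZMod 2) (m : TChar g) :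
    Sum.elim (c • m).1 (c • m).2 = c • Sum.elim m.1 m.2 := by
  funext i; cases i <;> rfl

lemma dot_pack (v m : TChar g) :
    Sum.elim v.2 v.1 ⬝ᵥ Sum.elim m.1 m.2 = symplecticPairing m v := by
  rw [dotProduct, Fintype.sum_sum_type, symplecticPairing, Finset.sum_add_distrib]
  simp only [Sum.elim_inl, Sum.elim_inr]
  congr 1
  · exact Finset.sum_congr rfl fun i _ => by ring
  · exact Finset.sum_congr rfl fun i _ => by ring

lemma act_Nmat (v m : TChar g) :
    (Jb g * (Nmat v).map (Int.cast : ℤ → ZMod 2) * Jb g).mulVec (Sum.elim m.1 m.2)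
      = Sum.elim (tvL v m).1 (tvL v m).2 := by
  rw [Nmat_map]
  have h1 : Jb g * (1 + vecMulVec (Sum.elim v.2 v.1) ((Jb g).mulVec (Sum.elim v.2 v.1))) * Jb g
      = 1 + vecMulVec (Sum.elim v.1 v.2) (Sum.elim v.2 v.1) := by
    rw [Matrix.mul_add, Matrix.add_mul, Matrix.mul_one, Jb_sq]
    congr 1
    rw [mul_vecMulVec, vecMulVec_mul, Jb_mulVec_elim, ← Matrix.mulVec_transpose, Jb_transpose,
      Jb_mulVec_elim]
  rw [h1, Matrix.add_mulVec, Matrix.one_mulVec, vecMulVec_mulVec, dot_pack, tvL_apply,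
    pack_add, pack_smul]

lemma act_prod (L : List (TChar g)) (m : TChar g) :
    (Jb g * ((L.map Nmat).prod).map (Int.cast : ℤ → ZMod 2) * Jb g).mulVec (Sum.elim m.1 m.2)
      = Sum.elim (((L.map tvL).prod) m).1 (((L.map tvL).prod) m).2 := by
  induction L generalizing m with
  | nil =>
    simp only [List.map_nil, List.prod_nil, map_oneZ, Matrix.mul_one, Jb_sq,
      Matrix.one_mulVec, Module.End.one_apply]
  | cons v L ih =>
    simp only [List.map_cons, List.prod_cons, map_mulZ]
    set Nb := (Nmat v).map (Int.cast : ℤ → ZMod 2)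
    set Pb := ((L.map Nmat).prod).map (Int.cast : ℤ → ZMod 2)
    have hsplit : Jb g * (Nb * Pb) * Jb g = (Jb g * Nb * Jb g) * (Jb g * Pb * Jb g) := by
      calc Jb g * (Nb * Pb) * Jb g
          = Jb g * Nb * 1 * (Pb * Jb g) := by rw [Matrix.mul_one]; noncomm_ring
        _ = Jb g * Nb * (Jb g * Jb g) * (Pb * Jb g) := by rw [Jb_sq]
        _ = (Jb g * Nb * Jb g) * (Jb g * Pb * Jb g) := by noncomm_ring
    rw [hsplit, ← Matrix.mulVec_mulVec, ih, act_Nmat, Module.End.mul_apply]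

lemma prod_Nmat_symplectic (L : List (TChar g)) : IsSymplectic ((L.map Nmat).prod) := by
  induction L with
  | nil => simpa using isSymplectic_one
  | cons v L ih =>
    simp only [List.map_cons, List.prod_cons]
    exact isSymplectic_mul (Nmat_symplectic v) ih

end SpAux


namespace SpAux
variable {g : ℕ}

lemma z2eq : ∀ x y : ZMod 2, x + y = 0 → x = y := by decide

section SumSym
variable {ι : Type*} [Fintype ι] [DecidableEq ι]

lemma sum_sym (f : ι → ι → ZMod 2) (hf : ∀ i j, f i j = f j i) :
    (∑ i, ∑ j, f i j) = ∑ i, f i i := by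
  rw [← Finset.sum_product']
  rw [← Finset.diag_union_offDiag Finset.univ,
    Finset.sum_union (Finset.disjoint_diag_offDiag _)]
  have hdiag : ∑ p ∈ Finset.univ.diag, f p.1 p.2 = ∑ i, f i i :=
    Finset.sum_diag Finset.univ (fun p => f p.1 p.2)
  have hoff : ∑ p ∈ Finset.univ.offDiag, f p.1 p.2 = 0 := by
    apply Finset.sum_involution (g := fun p _ => (p.2, p.1))
    · intro p _
      rw [hf p.1 p.2]
      exact z2add _
    · intro p hp _
      have hne := (Finset.mem_offDiag.1 hp).2.2
      intro hc
      exact hne ((Prod.ext_iff.1 hc).2.symm ▸ (Prod.ext_iff.1 hc).1 ▸ rfl)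
    · intro p hp
      exact Finset.mem_offDiag.2 ⟨Finset.mem_univ _, Finset.mem_univ _,
        (Finset.mem_offDiag.1 hp).2.2.symm⟩
    · intro p _
      rfl
  rw [hdiag, hoff, add_zero]

lemma dot_sym (S : Matrix ι ι (ZMod 2)) (hS : Sᵀ = S) (x : ι → ZMod 2) :
    x ⬝ᵥ S.mulVec x = ∑ i, x i * S i i := by
  have hentry : ∀ i j, S j i = S i j := fun i j => by
    conv_lhs => rw [← hS]
    rw [Matrix.transpose_apply]
  calc x ⬝ᵥ S.mulVec x = ∑ i, ∑ j, x i * S i j * x j := by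
        simp only [dotProduct, Matrix.mulVec, Finset.mul_sum]
        exact Finset.sum_congr rfl fun i _ => Finset.sum_congr rfl fun j _ => by ring
    _ = ∑ i, x i * S i i * x i :=
        sum_sym _ (fun i j => by rw [hentry i j]; ring)
    _ = ∑ i, x i * S i i := Finset.sum_congr rfl fun i _ => by
        rw [mul_comm (x i) (S i i), mul_assoc, z2sq, mul_comm]


lemma col_diag (X S : Matrix ι ι (ZMod 2)) (hS : Sᵀ = S) (i : ι) :
    ∑ j, X j i * S j j = (Xᵀ * S * X) i i := by
  have hentry : ∀ a b, S a b = S b a := fun a b => by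
    conv_lhs => rw [← hS]
    rw [Matrix.transpose_apply]
  calc (∑ j, X j i * S j j) = ∑ j, ∑ k, X j i * S j k * X k i := by
        symm
        refine (sum_sym _ (fun j k => by rw [hentry j k]; ring)).trans ?_
        exact Finset.sum_congr rfl fun j _ => by
          rw [mul_comm (X j i) (S j j), mul_assoc, z2sq, mul_comm]
    _ = (Xᵀ * S * X) i i := by
        simp only [Matrix.mul_apply, Matrix.transpose_apply, Finset.sum_mul, Finset.mul_sum]
        rw [Finset.sum_comm]
end SumSym

section SumSym2
variable {ι : Type*} [Fintype ι] [DecidableEq ι]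

lemma diag_dot_trace (S T : Matrix ι ι (ZMod 2)) (hS : Sᵀ = S) (hT : Tᵀ = T) :
    ∑ i, S i i * T i i = Matrix.trace (S * T) := by
  have hSe : ∀ a b, S a b = S b a := fun a b => by
    conv_lhs => rw [← hS]
    rw [Matrix.transpose_apply]
  have hTe : ∀ a b, T a b = T b a := fun a b => by
    conv_lhs => rw [← hT]
    rw [Matrix.transpose_apply]
  symm
  calc Matrix.trace (S * T) = ∑ i, ∑ j, S i j * T j i := by
        simp [Matrix.trace, Matrix.diag, Matrix.mul_apply]
    _ = ∑ i, S i i * T i i :=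
        sum_sym _ (fun i j => by rw [hSe i j, hTe j i])

lemma trace_sq (X : Matrix ι ι (ZMod 2)) : Matrix.trace (X * X) = Matrix.trace X := by
  calc Matrix.trace (X * X) = ∑ i, ∑ j, X i j * X j i := by
        simp [Matrix.trace, Matrix.diag, Matrix.mul_apply]
    _ = ∑ i, X i i * X i i := sum_sym _ (fun i j => by ring)
    _ = Matrix.trace X := by
        simp only [Matrix.trace, Matrix.diag]
        exact Finset.sum_congr rfl fun i _ => z2sq _

lemma m_addself (X : Matrix ι ι (ZMod 2)) : X + X = 0 := by
  ext i j
  rw [Matrix.add_apply, Matrix.zero_apply]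
  exact z2add _

lemma meq_of_add_eq_zero {X Y : Matrix ι ι (ZMod 2)} (h : X + Y = 0) : X = Y := by
  ext i j
  have h2 := congrArg (fun Z : Matrix ι ι (ZMod 2) => Z i j) h
  simp only [Matrix.add_apply, Matrix.zero_apply] at h2
  exact z2eq _ _ h2

lemma meq_one_add_of_add_eq_one {X Y : Matrix ι ι (ZMod 2)} (h : X + Y = 1) : X = 1 + Y := by
  have h2 : X + Y + Y = 1 + Y := by rw [h]
  rwa [add_assoc, m_addself, add_zero] at h2

end SumSym2

end SpAux


namespace SpAux
variable {g : ℕ}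

def bA (M : SpMat g) : Matrix (Fin g) (Fin g) (ZMod 2) :=
  (M.toBlocks₁₁).map (Int.cast : ℤ → ZMod 2)
def bB (M : SpMat g) : Matrix (Fin g) (Fin g) (ZMod 2) :=
  (M.toBlocks₁₂).map (Int.cast : ℤ → ZMod 2)
def bC (M : SpMat g) : Matrix (Fin g) (Fin g) (ZMod 2) :=
  (M.toBlocks₂₁).map (Int.cast : ℤ → ZMod 2)
def bD (M : SpMat g) : Matrix (Fin g) (Fin g) (ZMod 2) :=
  (M.toBlocks₂₂).map (Int.cast : ℤ → ZMod 2)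

lemma blocks_map (M : SpMat g) :
    M.map (Int.cast : ℤ → ZMod 2) = Matrix.fromBlocks (bA M) (bB M) (bC M) (bD M) := by
  conv_lhs => rw [← Matrix.fromBlocks_toBlocks M]
  rw [Matrix.fromBlocks_map]
  rfl

lemma rels1 {M : SpMat g} (hM : IsSymplectic M) :
    Matrix.fromBlocks ((bC M)ᵀ * bA M + (bA M)ᵀ * bC M) ((bC M)ᵀ * bB M + (bA M)ᵀ * bD M)
      ((bD M)ᵀ * bA M + (bB M)ᵀ * bC M) ((bD M)ᵀ * bB M + (bB M)ᵀ * bD M)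
      = Matrix.fromBlocks 0 1 1 0 := by
  have hb := map_symp hM
  rw [blocks_map] at hb
  rw [Matrix.fromBlocks_transpose] at hb
  show _ = Jb g
  rw [← hb]
  unfold Jb
  rw [Matrix.fromBlocks_multiply, Matrix.fromBlocks_multiply]
  simp [Matrix.mul_zero, Matrix.mul_one, Matrix.zero_mul, Matrix.one_mul]

lemma rels2 {M : SpMat g} (hM : IsSymplectic M) :
    Matrix.fromBlocks (bB M * (bA M)ᵀ + bA M * (bB M)ᵀ) (bB M * (bC M)ᵀ + bA M * (bD M)ᵀ)
      (bD M * (bA M)ᵀ + bC M * (bB M)ᵀ) (bD M * (bC M)ᵀ + bC M * (bD M)ᵀ)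
      = Matrix.fromBlocks 0 1 1 0 := by
  have hZ := isSymplectic_other hM
  have hb := congrArg (fun X : SpMat g => X.map (Int.cast : ℤ → ZMod 2)) hZ
  simp only [map_mulZ, map_transposeZ, Jmat_map] at hb
  rw [blocks_map] at hb
  rw [Matrix.fromBlocks_transpose] at hb
  show _ = Jb g
  rw [← hb]
  unfold Jb
  rw [Matrix.fromBlocks_multiply, Matrix.fromBlocks_multiply]
  simp [Matrix.mul_zero, Matrix.mul_one, Matrix.zero_mul, Matrix.one_mul]

end SpAux

namespace SpAux
variable {g : ℕ}

lemma r11add {M : SpMat g} (hM : IsSymplectic M) :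
    (bC M)ᵀ * bA M + (bA M)ᵀ * bC M = 0 := by
  have h := congrArg Matrix.toBlocks₁₁ (rels1 hM)
  simpa only [Matrix.toBlocks_fromBlocks₁₁] using h

lemma r21add {M : SpMat g} (hM : IsSymplectic M) :
    (bD M)ᵀ * bA M + (bB M)ᵀ * bC M = 1 := by
  have h := congrArg Matrix.toBlocks₂₁ (rels1 hM)
  simpa only [Matrix.toBlocks_fromBlocks₂₁] using h

lemma r22add {M : SpMat g} (hM : IsSymplectic M) :
    (bD M)ᵀ * bB M + (bB M)ᵀ * bD M = 0 := by
  have h := congrArg Matrix.toBlocks₂₂ (rels1 hM)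
  simpa only [Matrix.toBlocks_fromBlocks₂₂] using h

lemma s11sym {M : SpMat g} (hM : IsSymplectic M) : (bA M * (bB M)ᵀ)ᵀ = bA M * (bB M)ᵀ := by
  have h := congrArg Matrix.toBlocks₁₁ (rels2 hM)
  simp only [Matrix.toBlocks_fromBlocks₁₁] at h
  have h2 : bB M * (bA M)ᵀ = bA M * (bB M)ᵀ := meq_of_add_eq_zero h
  rw [Matrix.transpose_mul, Matrix.transpose_transpose, h2]

lemma s22sym {M : SpMat g} (hM : IsSymplectic M) : (bC M * (bD M)ᵀ)ᵀ = bC M * (bD M)ᵀ := by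
  have h := congrArg Matrix.toBlocks₂₂ (rels2 hM)
  simp only [Matrix.toBlocks_fromBlocks₂₂] at h
  have h2 : bD M * (bC M)ᵀ = bC M * (bD M)ᵀ := meq_of_add_eq_zero h
  rw [Matrix.transpose_mul, Matrix.transpose_transpose, h2]

lemma r11sym {M : SpMat g} (hM : IsSymplectic M) : ((bC M)ᵀ * bA M)ᵀ = (bC M)ᵀ * bA M := by
  have h2 : (bC M)ᵀ * bA M = (bA M)ᵀ * bC M := meq_of_add_eq_zero (r11add hM)
  rw [Matrix.transpose_mul, Matrix.transpose_transpose, ← h2]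

lemma r22sym {M : SpMat g} (hM : IsSymplectic M) : ((bD M)ᵀ * bB M)ᵀ = (bD M)ᵀ * bB M := by
  have h2 : (bD M)ᵀ * bB M = (bB M)ᵀ * bD M := meq_of_add_eq_zero (r22add hM)
  rw [Matrix.transpose_mul, Matrix.transpose_transpose, ← h2]

lemma diag_cast (X Y : Matrix (Fin g) (Fin g) ℤ) (i : Fin g) :
    (((X * Yᵀ) i i : ℤ) : ZMod 2)
      = ((X.map (Int.cast : ℤ → ZMod 2)) * (Y.map (Int.cast : ℤ → ZMod 2))ᵀ) i i := by
  simp only [Matrix.mul_apply, Matrix.transpose_apply, Matrix.map_apply]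
  push_cast
  rfl

/-- The key formula for the action of a symplectic matrix on characteristics. -/
lemma charAct_eq {M : SpMat g} (hM : IsSymplectic M) (m : TChar g) :
    charAct M m
      = ((bD M).mulVec m.1 + (bC M).mulVec m.2 + fun i => (bC M * (bD M)ᵀ) i i,
         (bB M).mulVec m.1 + (bA M).mulVec m.2 + fun i => (bA M * (bB M)ᵀ) i i) := by
  unfold charAct
  have hv : ((M.map (Int.cast : ℤ → ZMod 2))ᵀ)⁻¹.mulVec (Sum.elim m.1 m.2)
      = Sum.elim ((bD M).mulVec m.1 + (bC M).mulVec m.2)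
                 ((bB M).mulVec m.1 + (bA M).mulVec m.2) := by
    rw [inv_transpose_eq hM, blocks_map]
    have hJMJ : Jb g * Matrix.fromBlocks (bA M) (bB M) (bC M) (bD M) * Jb g
        = Matrix.fromBlocks (bD M) (bC M) (bB M) (bA M) := by
      unfold Jb
      rw [Matrix.fromBlocks_multiply, Matrix.fromBlocks_multiply]
      simp
    rw [hJMJ, Matrix.fromBlocks_mulVec]
    simp [Sum.elim_comp_inl, Sum.elim_comp_inr]
  refine Prod.ext ?_ ?_
  · show (fun i => (((M.map (Int.cast : ℤ → ZMod 2))ᵀ)⁻¹.mulVec (Sum.elim m.1 m.2)) (Sum.inl i)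
        + (((M.toBlocks₂₁ * M.toBlocks₂₂ᵀ) i i : ℤ) : ZMod 2)) = _
    funext i
    rw [hv]
    simp only [Sum.elim_inl, Pi.add_apply]
    rw [diag_cast]
    rfl
  · show (fun i => (((M.map (Int.cast : ℤ → ZMod 2))ᵀ)⁻¹.mulVec (Sum.elim m.1 m.2)) (Sum.inr i)
        + (((M.toBlocks₁₁ * M.toBlocks₁₂ᵀ) i i : ℤ) : ZMod 2)) = _
    funext i
    rw [hv]
    simp only [Sum.elim_inr, Pi.add_apply]
    rw [diag_cast]
    rfl

end SpAux


namespace SpAux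
variable {g : ℕ}

lemma dotH1 (X Y : Matrix (Fin g) (Fin g) (ZMod 2)) (x y : Fin g → ZMod 2) :
    (X.mulVec x) ⬝ᵥ (Y.mulVec y) = x ⬝ᵥ ((Xᵀ * Y).mulVec y) := by
  rw [Matrix.dotProduct_mulVec]
  have h : (X.mulVec x) ᵥ* Y = x ᵥ* (Xᵀ * Y) := by
    rw [← Matrix.vecMul_vecMul, Matrix.vecMul_transpose]
  rw [h, ← Matrix.dotProduct_mulVec]

lemma dotH2 (S : Matrix (Fin g) (Fin g) (ZMod 2)) (x y : Fin g → ZMod 2) :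
    x ⬝ᵥ (S.mulVec y) = y ⬝ᵥ (Sᵀ.mulVec x) := by
  rw [Matrix.dotProduct_mulVec, dotProduct_comm]
  congr 1
  rw [← Matrix.transpose_transpose S, Matrix.vecMul_transpose, Matrix.transpose_transpose]

lemma step1 (P Q : Matrix (Fin g) (Fin g) (ZMod 2)) : P + (1 + Q) * P + Q * P = 0 := by
  have h : P + (1 + Q) * P + Q * P = (P + P) + (Q * P + Q * P) := by noncomm_ring
  rw [h, m_addself, m_addself, add_zero]

lemma step2 (P Q : Matrix (Fin g) (Fin g) (ZMod 2)) : P + P * (1 + Q) + P * Q = 0 := by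
  have h : P + P * (1 + Q) + P * Q = (P + P) + (P * Q + P * Q) := by noncomm_ring
  rw [h, m_addself, m_addself, add_zero]

lemma parity {M : SpMat g} (hM : IsSymplectic M) (m : TChar g) :
    IsEvenChar (charAct M m) ↔ IsEvenChar m := by
  have hr22 : (bD M)ᵀ * bB M = (bB M)ᵀ * bD M := meq_of_add_eq_zero (r22add hM)
  have hCA : (bC M)ᵀ * bA M = (bA M)ᵀ * bC M := meq_of_add_eq_zero (r11add hM)
  have hDA : (bD M)ᵀ * bA M = 1 + (bB M)ᵀ * bC M := meq_one_add_of_add_eq_one (r21add hM)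
  have hBC : (bB M)ᵀ * bC M = 1 + (bD M)ᵀ * bA M :=
    meq_one_add_of_add_eq_one (by rw [add_comm]; exact r21add hM)
  have key : (charAct M m).1 ⬝ᵥ (charAct M m).2 = m.1 ⬝ᵥ m.2 := by
    rw [charAct_eq hM]
    set a := m.1 with ha
    set b := m.2 with hb
    set d1 : Fin g → ZMod 2 := fun i => (bC M * (bD M)ᵀ) i i with hd1
    set d2 : Fin g → ZMod 2 := fun i => (bA M * (bB M)ᵀ) i i with hd2
    show ((bD M).mulVec a + (bC M).mulVec b + d1) ⬝ᵥ ((bB M).mulVec a + (bA M).mulVec b + d2)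
        = a ⬝ᵥ b
    have t11 : (bD M *ᵥ a) ⬝ᵥ (bB M *ᵥ a) = a ⬝ᵥ (fun i => ((bD M)ᵀ * bB M) i i) := by
      rw [dotH1]
      exact dot_sym _ (r22sym hM) a
    have hr21' : (bA M)ᵀ * bD M + (bC M)ᵀ * bB M = 1 := by
      have h := congrArg Matrix.transpose (r21add hM)
      simpa [Matrix.transpose_add, Matrix.transpose_mul, Matrix.transpose_transpose] using h
    have t_ab : (bD M *ᵥ a) ⬝ᵥ (bA M *ᵥ b) + (bC M *ᵥ b) ⬝ᵥ (bB M *ᵥ a) = a ⬝ᵥ b := by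
      rw [dotH1, dotH1, dotH2, Matrix.transpose_mul, Matrix.transpose_transpose,
        ← dotProduct_add, ← Matrix.add_mulVec, hr21', Matrix.one_mulVec]
      exact dotProduct_comm b a
    have t13 : (bD M *ᵥ a) ⬝ᵥ d2 = a ⬝ᵥ ((bD M)ᵀ *ᵥ d2) := by
      rw [dotProduct_comm, dotH2]
    have t31 : d1 ⬝ᵥ (bB M *ᵥ a) = a ⬝ᵥ ((bB M)ᵀ *ᵥ d1) := by
      rw [dotH2]
    have t22 : (bC M *ᵥ b) ⬝ᵥ (bA M *ᵥ b) = b ⬝ᵥ (fun i => ((bC M)ᵀ * bA M) i i) := by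
      rw [dotH1]
      exact dot_sym _ (r11sym hM) b
    have t23 : (bC M *ᵥ b) ⬝ᵥ d2 = b ⬝ᵥ ((bC M)ᵀ *ᵥ d2) := by
      rw [dotProduct_comm, dotH2]
    have t32 : d1 ⬝ᵥ (bA M *ᵥ b) = b ⬝ᵥ ((bA M)ᵀ *ᵥ d1) := by
      rw [dotH2]
    have Emat1 : (bD M)ᵀ * bB M + (bD M)ᵀ * (bA M * (bB M)ᵀ) * bD M
        + (bB M)ᵀ * (bC M * (bD M)ᵀ) * bB M = 0 := by
      calc (bD M)ᵀ * bB M + (bD M)ᵀ * (bA M * (bB M)ᵀ) * bD M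
            + (bB M)ᵀ * (bC M * (bD M)ᵀ) * bB M
          = (bD M)ᵀ * bB M + ((bD M)ᵀ * bA M) * ((bB M)ᵀ * bD M)
            + ((bB M)ᵀ * bC M) * ((bD M)ᵀ * bB M) := by noncomm_ring
        _ = (bD M)ᵀ * bB M + (1 + (bB M)ᵀ * bC M) * ((bD M)ᵀ * bB M)
            + ((bB M)ᵀ * bC M) * ((bD M)ᵀ * bB M) := by rw [hDA, ← hr22]
        _ = 0 := step1 _ _
    have Emat2 : (bC M)ᵀ * bA M + (bC M)ᵀ * (bA M * (bB M)ᵀ) * bC M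
        + (bA M)ᵀ * (bC M * (bD M)ᵀ) * bA M = 0 := by
      calc (bC M)ᵀ * bA M + (bC M)ᵀ * (bA M * (bB M)ᵀ) * bC M
            + (bA M)ᵀ * (bC M * (bD M)ᵀ) * bA M
          = (bC M)ᵀ * bA M + ((bC M)ᵀ * bA M) * ((bB M)ᵀ * bC M)
            + ((bA M)ᵀ * bC M) * ((bD M)ᵀ * bA M) := by noncomm_ring
        _ = (bC M)ᵀ * bA M + ((bC M)ᵀ * bA M) * (1 + (bD M)ᵀ * bA M)
            + ((bC M)ᵀ * bA M) * ((bD M)ᵀ * bA M) := by rw [hBC, ← hCA]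
        _ = 0 := step2 _ _
    have hE1 : (fun i => ((bD M)ᵀ * bB M) i i) + (bD M)ᵀ *ᵥ d2 + (bB M)ᵀ *ᵥ d1 = 0 := by
      funext i
      have e2 : ((bD M)ᵀ *ᵥ d2) i = ((bD M)ᵀ * (bA M * (bB M)ᵀ) * bD M) i i := by
        have : ((bD M)ᵀ *ᵥ d2) i = ∑ j, bD M j i * (bA M * (bB M)ᵀ) j j := by
          simp [Matrix.mulVec, dotProduct, Matrix.transpose_apply, hd2]
        rw [this]
        exact col_diag (bD M) _ (s11sym hM) i
      have e3 : ((bB M)ᵀ *ᵥ d1) i = ((bB M)ᵀ * (bC M * (bD M)ᵀ) * bB M) i i := by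
        have : ((bB M)ᵀ *ᵥ d1) i = ∑ j, bB M j i * (bC M * (bD M)ᵀ) j j := by
          simp [Matrix.mulVec, dotProduct, Matrix.transpose_apply, hd1]
        rw [this]
        exact col_diag (bB M) _ (s22sym hM) i
      show ((bD M)ᵀ * bB M) i i + ((bD M)ᵀ *ᵥ d2) i + ((bB M)ᵀ *ᵥ d1) i = (0 : Fin g → ZMod 2) i
      rw [e2, e3, ← Matrix.add_apply, ← Matrix.add_apply, Emat1]
      rfl
    have hE2 : (fun i => ((bC M)ᵀ * bA M) i i) + (bC M)ᵀ *ᵥ d2 + (bA M)ᵀ *ᵥ d1 = 0 := by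
      funext i
      have e2 : ((bC M)ᵀ *ᵥ d2) i = ((bC M)ᵀ * (bA M * (bB M)ᵀ) * bC M) i i := by
        have : ((bC M)ᵀ *ᵥ d2) i = ∑ j, bC M j i * (bA M * (bB M)ᵀ) j j := by
          simp [Matrix.mulVec, dotProduct, Matrix.transpose_apply, hd2]
        rw [this]
        exact col_diag (bC M) _ (s11sym hM) i
      have e3 : ((bA M)ᵀ *ᵥ d1) i = ((bA M)ᵀ * (bC M * (bD M)ᵀ) * bA M) i i := by
        have : ((bA M)ᵀ *ᵥ d1) i = ∑ j, bA M j i * (bC M * (bD M)ᵀ) j j := by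
          simp [Matrix.mulVec, dotProduct, Matrix.transpose_apply, hd1]
        rw [this]
        exact col_diag (bA M) _ (s22sym hM) i
      show ((bC M)ᵀ * bA M) i i + ((bC M)ᵀ *ᵥ d2) i + ((bA M)ᵀ *ᵥ d1) i = (0 : Fin g → ZMod 2) i
      rw [e2, e3, ← Matrix.add_apply, ← Matrix.add_apply, Emat2]
      rfl
    have hS1 : a ⬝ᵥ (fun i => ((bD M)ᵀ * bB M) i i) + a ⬝ᵥ ((bD M)ᵀ *ᵥ d2)
        + a ⬝ᵥ ((bB M)ᵀ *ᵥ d1) = 0 := by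
      rw [← dotProduct_add, ← dotProduct_add, hE1, dotProduct_zero]
    have hS2 : b ⬝ᵥ (fun i => ((bC M)ᵀ * bA M) i i) + b ⬝ᵥ ((bC M)ᵀ *ᵥ d2)
        + b ⬝ᵥ ((bA M)ᵀ *ᵥ d1) = 0 := by
      rw [← dotProduct_add, ← dotProduct_add, hE2, dotProduct_zero]
    have t33 : d1 ⬝ᵥ d2 = 0 := by
      have h0 : d1 ⬝ᵥ d2 = Matrix.trace ((bC M * (bD M)ᵀ) * (bA M * (bB M)ᵀ)) := by
        rw [← diag_dot_trace _ _ (s22sym hM) (s11sym hM)]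
        rfl
      have h1 : (bC M * (bD M)ᵀ) * (bA M * (bB M)ᵀ) = bC M * ((bD M)ᵀ * bA M) * (bB M)ᵀ := by
        noncomm_ring
      have h2 : bC M * (1 + (bB M)ᵀ * bC M) * (bB M)ᵀ
          = bC M * (bB M)ᵀ + (bC M * (bB M)ᵀ) * (bC M * (bB M)ᵀ) := by
        noncomm_ring
      rw [h0, h1, hDA, h2, Matrix.trace_add, trace_sq]
      exact z2add _
    simp only [add_dotProduct, dotProduct_add]
    linear_combination t11 + t_ab + t13 + t31 + t22 + t23 + t32 + t33 + hS1 + hS2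
  unfold IsEvenChar
  show (charAct M m).1 ⬝ᵥ (charAct M m).2 = 0 ↔ m.1 ⬝ᵥ m.2 = 0
  rw [key]

end SpAux

namespace SpAux
variable {g : ℕ}

lemma prod_rev_inv (L : List (TChar g)) :
    ((L.map tvL).prod) * ((L.reverse.map tvL).prod) = 1 := by
  induction L with
  | nil => simp
  | cons v L ih =>
    rw [List.map_cons, List.prod_cons, List.reverse_cons, List.map_append, List.prod_append,
      List.map_singleton, List.prod_singleton]
    calc (tvL v * (L.map tvL).prod) * ((L.reverse.map tvL).prod * tvL v)
        = tvL v * (((L.map tvL).prod * (L.reverse.map tvL).prod) * tvL v) := by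
          rw [mul_assoc, mul_assoc]
      _ = tvL v * tvL v := by rw [ih, one_mul]
      _ = 1 := tvL_invol v

lemma prod_rev_inv' (L : List (TChar g)) :
    ((L.reverse.map tvL).prod) * ((L.map tvL).prod) = 1 := by
  have h := prod_rev_inv L.reverse
  rwa [List.reverse_reverse] at h

end SpAux


/-- `Sp(2g,ℤ)` acts transitively on the even cosets of Göpel groups: for Göpel groups
`G`, `G'` with even cosets `M`, `M'` there is a symplectic matrix whose characteristic
action maps `M` bijectively onto `M'`. -/
theorem sp_transitive_on_even_cosets (g : ℕ) (hg : 1 ≤ g)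
    (G G' : Submodule (ZMod 2) (TChar g)) (hG : IsGopel G) (hG' : IsGopel G') :
    ∃ M₀ : SpMat g, IsSymplectic M₀ ∧
      Set.BijOn (charAct M₀) (evenCoset G) (evenCoset G') := by
  classical
  obtain ⟨L, hL⟩ := SpAux.exists_list hG hG'
  set φ : TChar g →ₗ[ZMod 2] TChar g := (L.map SpAux.tvL).prod with hφ
  set φ' : TChar g →ₗ[ZMod 2] TChar g := (L.reverse.map SpAux.tvL).prod with hφ'
  have hinv1 : φ * φ' = 1 := SpAux.prod_rev_inv L
  have hinv2 : φ' * φ = 1 := SpAux.prod_rev_inv' L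
  have hφφ' : ∀ z, φ (φ' z) = z := fun z => by
    rw [← Module.End.mul_apply, hinv1, Module.End.one_apply]
  have hφ'φ : ∀ z, φ' (φ z) = z := fun z => by
    rw [← Module.End.mul_apply, hinv2, Module.End.one_apply]
  set M₀ : SpMat g := (L.map SpAux.Nmat).prod with hM₀
  have hsym : IsSymplectic M₀ := SpAux.prod_Nmat_symplectic L
  set t : TChar g := (fun i => (((M₀.toBlocks₂₁ * M₀.toBlocks₂₂ᵀ) i i : ℤ) : ZMod 2),
                      fun i => (((M₀.toBlocks₁₁ * M₀.toBlocks₁₂ᵀ) i i : ℤ) : ZMod 2)) with ht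
  have hform : ∀ m : TChar g, charAct M₀ m = φ m + t := by
    intro m
    have hmv : ((M₀.map (Int.cast : ℤ → ZMod 2))ᵀ)⁻¹.mulVec (Sum.elim m.1 m.2)
        = Sum.elim (φ m).1 (φ m).2 := by
      rw [SpAux.inv_transpose_eq hsym]
      exact SpAux.act_prod L m
    unfold charAct
    refine Prod.ext ?_ ?_
    · show (fun i => (((M₀.map (Int.cast : ℤ → ZMod 2))ᵀ)⁻¹.mulVec (Sum.elim m.1 m.2)) (Sum.inl i)
          + (((M₀.toBlocks₂₁ * M₀.toBlocks₂₂ᵀ) i i : ℤ) : ZMod 2)) = (φ m + t).1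
      funext i
      rw [hmv]
      rfl
    · show (fun i => (((M₀.map (Int.cast : ℤ → ZMod 2))ᵀ)⁻¹.mulVec (Sum.elim m.1 m.2)) (Sum.inr i)
          + (((M₀.toBlocks₁₁ * M₀.toBlocks₁₂ᵀ) i i : ℤ) : ZMod 2)) = (φ m + t).2
      funext i
      rw [hmv]
      rfl
  have hmem : ∀ x ∈ G, φ x ∈ G' := by
    intro x hx
    rw [← hL]
    exact Submodule.mem_map_of_mem hx
  have hmem' : ∀ y ∈ G', ∃ x ∈ G, φ x = y := by
    intro y hy
    rw [← hL] at hy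
    obtain ⟨x, hx, hxy⟩ := Submodule.mem_map.1 hy
    exact ⟨x, hx, hxy⟩
  have haffine : ∀ m x : TChar g, charAct M₀ (m + x) = charAct M₀ m + φ x := by
    intro m x
    rw [hform, hform, map_add]
    abel
  refine ⟨M₀, hsym, ?_, ?_, ?_⟩
  · -- MapsTo
    intro m hm x' hx'
    obtain ⟨x, hx, rfl⟩ := hmem' x' hx'
    have h1 : charAct M₀ m + φ x = charAct M₀ (m + x) := (haffine m x).symm
    rw [h1]
    exact (SpAux.parity hsym (m + x)).2 (hm x hx)
  · -- InjOn
    intro m _ m' _ h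
    rw [hform, hform] at h
    have h2 : φ m = φ m' := add_right_cancel h
    have h3 := congrArg φ' h2
    rwa [hφ'φ, hφ'φ] at h3
  · -- SurjOn
    intro n hn
    refine ⟨φ' (n + t), ?_, ?_⟩
    · intro x hx
      have hc : charAct M₀ (φ' (n + t) + x) = n + φ x := by
        rw [haffine, hform, hφφ']
        calc n + t + t + φ x = n + φ x + (t + t) := by abel
          _ = n + φ x := by rw [SpAux.addself, add_zero]
      refine (SpAux.parity hsym (φ' (n + t) + x)).1 ?_
      rw [hc]
      exact hn (φ x) (hmem x hx)
    · show charAct M₀ (φ' (n + t)) = n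
      rw [hform, hφφ']
      calc n + t + t = n + (t + t) := by abel
        _ = n := by rw [SpAux.addself, add_zero]
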